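/- Let d and p be nonnegative integers with d ≥ 1, and let m ≥ 3 and n ≥ 3 be integers. If n ≡ 2d−1 (mod 2d+1) and m ≤ 2d² + d, then γ_d^p(C_m ⊠ C_n) = γ_d^p(C_m) · γ_d^p(C_n) (in ℕ ∪ {∞}). -/

import Mathlib

open SimpleGraph

/-- The strong product `G ⊠ H` of two simple graphs. -/
def strongProd {α β : Type*} (G : SimpleGraph α) (H : SimpleGraph β) :
    SimpleGraph (α × β) where
  Adj x y := (G.Adj x.1 y.1 ∧ x.2 = y.2) ∨ (x.1 = y.1 ∧ H.Adj x.2 y.2) ∨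
    (G.Adj x.1 y.1 ∧ H.Adj x.2 y.2)
  symm := ⟨by
    rintro ⟨a, b⟩ ⟨c, e⟩ (⟨h1, h2⟩ | ⟨h1, h2⟩ | ⟨h1, h2⟩)
    · exact Or.inl ⟨h1.symm, h2.symm⟩
    · exact Or.inr (Or.inl ⟨h1.symm, h2.symm⟩)
    · exact Or.inr (Or.inr ⟨h1.symm, h2.symm⟩)⟩
  loopless := ⟨by
    rintro ⟨a, b⟩ (⟨h1, _⟩ | ⟨_, h2⟩ | ⟨h1, _⟩)
    · exact G.loopless.irrefl a h1
    · exact H.loopless.irrefl b h2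
    · exact G.loopless.irrefl a h1⟩

/-- `S` is a `d`-distance dominating set of `G`: every vertex is within distance `d`
of some vertex of `S`. -/
def IsDistDomSet {V : Type*} (G : SimpleGraph V) (d : ℕ) (S : Finset V) : Prop :=
  ∀ v : V, ∃ u ∈ S, G.dist u v ≤ d

/-- `S` is a `p`-packing of `G`: distinct vertices of `S` are at distance at least `p + 1`. -/
def IsPacking {V : Type*} (G : SimpleGraph V) (p : ℕ) (S : Finset V) : Prop :=
  ∀ x ∈ S, ∀ y ∈ S, x ≠ y → p + 1 ≤ G.dist x y

/-- The `d`-distance `p`-packing domination number `γ_d^p(G)`, an element of `ℕ∞`,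
equal to `⊤` if no `d`-distance dominating `p`-packing exists. -/
noncomputable def distPackDomNum {V : Type*} (G : SimpleGraph V) (d p : ℕ) : ℕ∞ :=
  sInf {n : ℕ∞ | ∃ S : Finset V, n = S.card ∧ IsDistDomSet G d S ∧ IsPacking G p S}

/-- The radius of a graph: the least `k` such that some vertex is within
distance `k` of all vertices. -/
noncomputable def graphRadius {V : Type*} (G : SimpleGraph V) : ℕ :=
  sInf {k : ℕ | ∃ u : V, ∀ v : V, G.dist u v ≤ k}

open Finset Classical
open Fin.NatCast Fin.CommRing

set_option linter.unusedSectionVars false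
set_option linter.unusedVariables false
set_option maxHeartbeats 1000000

/-- cyclic forward difference from `a` to `b` in `Z_n` -/
def dd (n a b : ℕ) : ℕ := if a ≤ b then b - a else n - (a - b)

lemma mod_small {x n : ℕ} (h : x < 2 * n) : x % n = if x < n then x else x - n := by
  split_ifs with h1
  · exact Nat.mod_eq_of_lt h1
  · rw [Nat.mod_eq_sub_mod (by omega), Nat.mod_eq_of_lt (by omega)]

section cyc
variable {n : ℕ} [NeZero n]

lemma sub_val (a b : Fin n) : (b - a).val = dd n a.val b.val := by
  have ha := a.is_lt
  have hb := b.is_lt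
  rw [Fin.sub_def]
  simp only [dd]
  rw [mod_small (by omega)]
  split_ifs <;> omega

lemma add_val (a b : Fin n) : (a + b).val = (a.val + b.val) % n := by rw [Fin.add_def]

lemma natCast_val (t : ℕ) : ((t : Fin n)).val = t % n := by rw [Fin.val_natCast]

lemma cyc_conn (hn : 1 ≤ n) : (cycleGraph n).Connected := by
  match n, hn with
  | (k+1), _ => exact cycleGraph_connected

lemma cyc_adj (hn : 3 ≤ n) {u v : Fin n} :
    (cycleGraph n).Adj u v ↔ dd n v.val u.val = 1 ∨ dd n u.val v.val = 1 := by
  rw [cycleGraph_adj', sub_val, sub_val]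

lemma cyc_adj_succ (hn : 3 ≤ n) (u : Fin n) : (cycleGraph n).Adj u (u + (1 : ℕ)) := by
  have hu := u.is_lt
  rw [cyc_adj hn]
  right
  have h1 : ((u + (1:ℕ))).val = (u.val + 1 % n) % n := by rw [add_val, natCast_val]
  rw [h1, Nat.mod_eq_of_lt (show (1:ℕ) < n by omega), mod_small (by omega)]
  simp only [dd]
  split_ifs <;> omega

lemma dist_le_shift (hn : 3 ≤ n) (u : Fin n) (t : ℕ) :
    (cycleGraph n).dist u (u + (t : Fin n)) ≤ t := by
  induction t with
  | zero => simp
  | succ t ih =>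
    have h1 : ((t + 1 : ℕ) : Fin n) = (t : Fin n) + (1 : ℕ) := by push_cast; ring
    rw [h1, ← add_assoc]
    calc (cycleGraph n).dist u (u + (t:Fin n) + (1:ℕ))
        ≤ (cycleGraph n).dist u (u + (t:Fin n)) +
            (cycleGraph n).dist (u + (t:Fin n)) (u + (t:Fin n) + (1:ℕ)) :=
          (cyc_conn (by omega)).dist_triangle
      _ ≤ t + 1 := by
          have h2 := (cyc_adj_succ hn (u + (t:Fin n)))
          rw [← SimpleGraph.dist_eq_one_iff_adj] at h2
          omega

lemma cyc_dist_lower (hn : 3 ≤ n) {a b : Fin n} (w : (cycleGraph n).Walk a b) :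
    min (dd n a.val b.val) (n - dd n a.val b.val) ≤ w.length := by
  induction w with
  | nil => simp [dd]
  | @cons a x b h w ih =>
    have hadj := (cyc_adj hn).mp h
    have hb := b.is_lt
    have hx := x.is_lt
    have ha := a.is_lt
    simp only [Walk.length_cons]
    simp only [dd] at *
    split_ifs at * <;> omega

lemma cyc_dist (hn : 3 ≤ n) (a b : Fin n) :
    (cycleGraph n).dist a b = min (dd n a.val b.val) (n - dd n a.val b.val) := by
  have ha := a.is_lt
  have hb := b.is_lt
  apply le_antisymm
  · have h1 : b = a + ((b - a).val : Fin n) := by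
      rw [Fin.cast_val_eq_self]; ring
    have h2 : a = b + ((a - b).val : Fin n) := by
      rw [Fin.cast_val_eq_self]; ring
    have d1 : (cycleGraph n).dist a b ≤ (b - a).val := by
      conv_lhs => rw [h1]
      exact dist_le_shift hn a _
    have d2 : (cycleGraph n).dist a b ≤ (a - b).val := by
      rw [SimpleGraph.dist_comm]
      conv_lhs => rw [h2]
      exact dist_le_shift hn b _
    rw [sub_val] at d1 d2
    simp only [dd] at *
    split_ifs at * <;> omega
  · obtain ⟨w, hw⟩ := (cyc_conn (by omega)).exists_walk_length_eq_dist a b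
    rw [← hw]
    exact cyc_dist_lower hn w

/-- the ball of radius `d` around `t` in the cycle -/
noncomputable def ball (n : ℕ) [NeZero n] (t : Fin n) (d : ℕ) : Finset (Fin n) :=
  Finset.univ.filter (fun j => (cycleGraph n).dist t j ≤ d)

lemma card_filter_fin (P : ℕ → Prop) [DecidablePred P] :
    ((Finset.univ : Finset (Fin n)).filter (fun j => P j.val)).card
      = ((range n).filter P).card := by
  apply Finset.card_bij (fun a _ => a.val)
  · intro a ha
    simp only [mem_filter, mem_range]
    exact ⟨a.is_lt, (mem_filter.mp ha).2⟩
  · intro a _ b _ h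
    exact Fin.ext h
  · intro b hb
    simp only [mem_filter, mem_range] at hb
    exact ⟨⟨b, hb.1⟩, by simp [hb.2], rfl⟩

lemma dist_shift (hn : 3 ≤ n) (a b t : Fin n) :
    (cycleGraph n).dist (a + t) (b + t) = (cycleGraph n).dist a b := by
  have ha := a.is_lt; have hb := b.is_lt; have ht := t.is_lt
  rw [cyc_dist hn, cyc_dist hn]
  have h1 : dd n (a + t).val (b + t).val = dd n a.val b.val := by
    rw [add_val, add_val, mod_small (by omega), mod_small (by omega)]
    simp only [dd]; split_ifs <;> omega
  rw [h1]

lemma ball_eq_image (hn : 3 ≤ n) (t : Fin n) (d : ℕ) :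
    ball n t d = (ball n 0 d).image (· + t) := by
  ext j
  simp only [_root_.ball, mem_image, mem_filter, mem_univ, true_and]
  constructor
  · intro h
    refine ⟨j - t, ?_, by ring⟩
    have h2 := dist_shift hn 0 (j - t) t
    rw [zero_add, sub_add_cancel] at h2
    omega
  · rintro ⟨x, hx, rfl⟩
    have h2 := dist_shift hn 0 x t
    rw [zero_add] at h2
    omega

lemma card_ball_le (hn : 3 ≤ n) (t : Fin n) (d : ℕ) : (ball n t d).card ≤ 2 * d + 1 := by
  rw [ball_eq_image hn]
  refine le_trans Finset.card_image_le ?_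
  unfold _root_.ball
  have h0 : ∀ j : Fin n, ((cycleGraph n).dist 0 j ≤ d) ↔ (j.val ≤ d ∨ n - d ≤ j.val) := by
    intro j
    rw [cyc_dist hn]
    have := j.is_lt
    simp only [dd, Fin.val_zero, Nat.zero_le, if_true, Nat.sub_zero]
    omega
  calc (Finset.univ.filter (fun j : Fin n => (cycleGraph n).dist 0 j ≤ d)).card
      = ((range n).filter (fun x => x ≤ d ∨ n - d ≤ x)).card := by
        simp only [h0]
        exact card_filter_fin (fun x => x ≤ d ∨ n - d ≤ x)
    _ ≤ (range (d+1) ∪ Ico (n-d) n).card := by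
        apply Finset.card_le_card
        intro x hx
        simp only [mem_filter, mem_range, mem_union, mem_Ico] at *
        omega
    _ ≤ (range (d+1)).card + (Ico (n-d) n).card := Finset.card_union_le _ _
    _ ≤ 2 * d + 1 := by rw [Finset.card_range, Nat.card_Ico]; omega

lemma card_ball_eq (hn : 3 ≤ n) (t : Fin n) (d : ℕ) (hdn : 2 * d + 1 ≤ n) :
    (ball n t d).card = 2 * d + 1 := by
  rw [ball_eq_image hn, Finset.card_image_of_injective _ (add_left_injective t)]
  unfold _root_.ball
  have h0 : ∀ j : Fin n, ((cycleGraph n).dist 0 j ≤ d) ↔ (j.val ≤ d ∨ n - d ≤ j.val) := by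
    intro j
    rw [cyc_dist hn]
    have := j.is_lt
    simp only [dd, Fin.val_zero, Nat.zero_le, if_true, Nat.sub_zero]
    omega
  calc (Finset.univ.filter (fun j : Fin n => (cycleGraph n).dist 0 j ≤ d)).card
      = ((range n).filter (fun x => x ≤ d ∨ n - d ≤ x)).card := by
        simp only [h0]
        exact card_filter_fin (fun x => x ≤ d ∨ n - d ≤ x)
    _ = (range (d+1) ∪ Ico (n-d) n).card := by
        congr 1
        ext x
        simp only [mem_filter, mem_range, mem_union, mem_Ico]
        omega
    _ = 2 * d + 1 := by
        rw [Finset.card_union_of_disjoint, Finset.card_range, Nat.card_Ico]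
        · omega
        · rw [Finset.disjoint_left]
          intro x hx hx'
          simp only [mem_range, mem_Ico] at *
          omega

lemma dom_card (hn : 3 ≤ n) {d : ℕ} {T : Finset (Fin n)}
    (hT : IsDistDomSet (cycleGraph n) d T) : n ≤ T.card * (2 * d + 1) := by
  have hsub : (Finset.univ : Finset (Fin n)) ⊆ T.biUnion (fun t => ball n t d) := by
    intro v _
    obtain ⟨u, hu, hd⟩ := hT v
    exact Finset.mem_biUnion.mpr ⟨u, hu, by simp [_root_.ball, hd]⟩
  calc n = (Finset.univ : Finset (Fin n)).card := by simp
    _ ≤ (T.biUnion (fun t => ball n t d)).card := Finset.card_le_card hsub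
    _ ≤ ∑ t ∈ T, (ball n t d).card := Finset.card_biUnion_le
    _ ≤ T.card * (2 * d + 1) := by
        apply Finset.sum_le_card_nsmul
        intro x _
        exact card_ball_le hn x d

lemma sep_card (hn : 3 ≤ n) {q : ℕ} (hq : 1 ≤ q) {T : Finset (Fin n)}
    (hT : ∀ x ∈ T, ∀ y ∈ T, x ≠ y → q ≤ (cycleGraph n).dist x y)
    (hT2 : 2 ≤ T.card) : T.card * q ≤ n := by
  rcases le_or_gt q n with hqn | hqn
  · set I : Fin n → Finset (Fin n) := fun x => (range q).image (fun t : ℕ => x + (t : Fin n)) with hI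
    have hcard : ∀ x : Fin n, (I x).card = q := by
      intro x
      rw [hI]
      rw [Finset.card_image_of_injOn, Finset.card_range]
      intro a ha b hb hab
      simp only [mem_coe, mem_range] at ha hb
      have := add_left_cancel hab
      have h1 : a % n = b % n := by
        have := congrArg Fin.val this
        rwa [natCast_val, natCast_val] at this
      rwa [Nat.mod_eq_of_lt (by omega), Nat.mod_eq_of_lt (by omega)] at h1
    have hdisj : ∀ x ∈ T, ∀ y ∈ T, x ≠ y → Disjoint (I x) (I y) := by
      intro x hx y hy hxy
      rw [Finset.disjoint_left]
      rintro z hz hz'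
      simp only [hI, mem_image, mem_range] at hz hz'
      obtain ⟨t, ht, rfl⟩ := hz
      obtain ⟨t', ht', heq⟩ := hz'
      have hdxy := hT x hx y hy hxy
      rw [cyc_dist hn] at hdxy
      have hyx : y - x = (t : Fin n) - (t' : Fin n) := by
        have : y + (t' : Fin n) = x + (t : Fin n) := heq
        linear_combination (norm := abel) this
      have h2 : (y - x).val = dd n (t' % n) (t % n) := by
        rw [hyx, sub_val, natCast_val, natCast_val]
      rw [Nat.mod_eq_of_lt (by omega), Nat.mod_eq_of_lt (by omega)] at h2
      rw [sub_val] at h2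
      simp only [dd] at h2 hdxy
      split_ifs at h2 hdxy <;> omega
    calc T.card * q = ∑ _x ∈ T, q := by rw [Finset.sum_const, smul_eq_mul]
      _ = ∑ x ∈ T, (I x).card := by
          apply Finset.sum_congr rfl; intro x _; rw [hcard]
      _ = (T.biUnion I).card := (Finset.card_biUnion hdisj).symm
      _ ≤ (Finset.univ : Finset (Fin n)).card := Finset.card_le_card (Finset.subset_univ _)
      _ = n := by simp
  · exfalso
    obtain ⟨x, hx, y, hy, hxy⟩ := Finset.one_lt_card.mp hT2
    have := hT x hx y hy hxy
    rw [cyc_dist hn] at this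
    have h1 : dd n x.val y.val ≤ n := by
      have := x.is_lt; have := y.is_lt
      simp only [dd]; split_ifs <;> omega
    omega

lemma cyc_two_dist_le (hn : 3 ≤ n) (a b : Fin n) : 2 * (cycleGraph n).dist a b ≤ n := by
  rw [cyc_dist hn]
  have := a.is_lt; have := b.is_lt
  simp only [dd]
  split_ifs <;> omega

lemma dist_interval (hn : 3 ≤ n) {q : ℕ} (hqn : q ≤ n) {c y y' : Fin n} {t t' : ℕ}
    (ht : t < q) (ht' : t' < q) (hy : c + (t : Fin n) = y) (hy' : c + (t' : Fin n) = y') :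
    (cycleGraph n).dist y y' ≤ q - 1 := by
  subst hy; subst hy'
  have h1 : (cycleGraph n).dist (c + (t:Fin n)) (c + (t':Fin n))
      = (cycleGraph n).dist (t : Fin n) (t' : Fin n) := by
    have := dist_shift hn (t : Fin n) (t' : Fin n) c
    rw [add_comm (t:Fin n) c, add_comm (t':Fin n) c] at this
    exact this
  rw [h1, cyc_dist hn, natCast_val, natCast_val,
    Nat.mod_eq_of_lt (by omega), Nat.mod_eq_of_lt (by omega)]
  simp only [dd]
  split_ifs <;> omega

lemma count_intervals {q : ℕ} (hq : 1 ≤ q) (hqn : q ≤ n) (b : Fin n) :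
    ((Finset.univ : Finset (Fin n)).filter
      (fun c => ∃ t, t < q ∧ c + (t : Fin n) = b)).card = q := by
  have hset : (Finset.univ : Finset (Fin n)).filter
      (fun c => ∃ t, t < q ∧ c + (t : Fin n) = b)
      = (range q).image (fun t : ℕ => b - (t : Fin n)) := by
    ext c
    simp only [mem_filter, mem_univ, true_and, mem_image, mem_range]
    constructor
    · rintro ⟨t, ht, hct⟩
      exact ⟨t, ht, by rw [← hct]; ring⟩
    · rintro ⟨t, ht, rfl⟩
      exact ⟨t, ht, by ring⟩
  rw [hset, Finset.card_image_of_injOn, Finset.card_range]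
  intro a ha c hc hac
  simp only [mem_coe, mem_range] at ha hc
  have h1 : (a : Fin n) = (c : Fin n) := sub_right_injective hac
  have := congrArg Fin.val h1
  rw [natCast_val, natCast_val, Nat.mod_eq_of_lt (by omega), Nat.mod_eq_of_lt (by omega)] at this
  exact this

lemma cyc_single (hn3 : 3 ≤ n) {d p : ℕ} (hle : n ≤ 2 * d + 1) :
    IsDistDomSet (cycleGraph n) d ({0} : Finset (Fin n)) ∧
      IsPacking (cycleGraph n) p ({0} : Finset (Fin n)) := by
  constructor
  · intro v
    refine ⟨0, Finset.mem_singleton_self 0, ?_⟩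
    rw [cyc_dist hn3]
    have := v.is_lt
    simp only [dd, Fin.val_zero]
    split_ifs <;> omega
  · intro x hx y hy hxy
    rw [Finset.mem_singleton] at hx hy
    exact absurd (hx.trans hy.symm) hxy

lemma cyc_construction (hn3 : 3 ≤ n) {s d : ℕ} (hs2 : 2 ≤ s) (hsN : s ≤ n)
    (hub : n ≤ s * (2 * d + 1)) :
    ∃ T : Finset (Fin n), T.card = s ∧ IsDistDomSet (cycleGraph n) d T ∧
      ∀ x ∈ T, ∀ y ∈ T, x ≠ y → n / s ≤ (cycleGraph n).dist x y := by
  set q := n / s with hqdef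
  set r := n % s with hrdef
  have hNqr : q * s + r = n := by rw [Nat.mul_comm]; exact Nat.div_add_mod n s
  have hrs : r < s := Nat.mod_lt _ (by omega)
  have hq1 : 1 ≤ q := (Nat.one_le_div_iff (by omega)).mpr hsN
  have hq_le : q ≤ 2 * d + 1 := by
    have h2 : s * (2 * d + 1) / s = 2 * d + 1 := Nat.mul_div_cancel_left _ (by omega)
    have h3 := Nat.div_le_div_right (c := s) hub
    rw [← hqdef] at h3
    omega
  have hq2d : 0 < r → q ≤ 2 * d := by
    intro hr
    by_contra hcon
    have hq' : q = 2 * d + 1 := by omega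
    have : q * s = (2 * d + 1) * s := by rw [hq']
    have h2 : s * (2 * d + 1) = (2 * d + 1) * s := Nat.mul_comm _ _
    omega
  set f : ℕ → ℕ := fun i => q * i + min i r with hfdef
  have hfsucc : ∀ i, f (i + 1) = f i + q + (min (i+1) r - min i r) := by
    intro i
    simp only [hfdef]
    have : q * (i + 1) = q * i + q := by ring
    omega
  have hgap : ∀ i, f (i + 1) ≤ f i + (2 * d + 1) := by
    intro i
    rcases Nat.eq_zero_or_pos r with hr | hr
    · rw [hfsucc]; simp [hr]; omega
    · have := hq2d hr
      rw [hfsucc]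
      have : min (i+1) r - min i r ≤ 1 := by omega
      omega
  have hf_mono : ∀ i j, i < j → f i + q ≤ f j := by
    intro i j hij
    induction j with
    | zero => omega
    | succ j ih =>
      rcases Nat.lt_or_ge i j with h | h
      · have := ih h
        rw [hfsucc]
        omega
      · have : i = j := by omega
        subst this
        rw [hfsucc]
        omega
  have hf_last : f (s - 1) + q = n := by
    simp only [hfdef]
    have h1 : min (s - 1) r = r := by omega
    rw [h1]
    have : q * (s - 1) + q = q * s := by
      have hs1 : s - 1 + 1 = s := by omega
      calc q * (s - 1) + q = q * (s - 1 + 1) := by ring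
        _ = q * s := by rw [hs1]
    omega
  have hf_lt : ∀ i, i < s → f i < n := by
    intro i hi
    rcases Nat.lt_or_ge i (s - 1) with h | h
    · have := hf_mono i (s - 1) h
      omega
    · have : i = s - 1 := by omega
      subst this
      omega
  have hval : ∀ i, i < s → ((f i : Fin n)).val = f i := by
    intro i hi
    rw [natCast_val, Nat.mod_eq_of_lt (hf_lt i hi)]
  have hf0 : f 0 = 0 := by simp [hfdef]
  refine ⟨(range s).image (fun i => ((f i : ℕ) : Fin n)), ?_, ?_, ?_⟩
  · rw [Finset.card_image_of_injOn, Finset.card_range]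
    intro a ha b hb hab
    simp only [mem_coe, mem_range] at ha hb
    have := congrArg Fin.val hab
    rw [hval a ha, hval b hb] at this
    by_contra hne
    rcases Nat.lt_or_ge a b with h | h
    · have := hf_mono a b h; omega
    · have := hf_mono b a (by omega); omega
  · intro v
    set u := v.val with hu
    have hu_lt : u < n := v.is_lt
    set i := Nat.findGreatest (fun i => f i ≤ u) (s - 1) with hi
    have hfi : f i ≤ u := Nat.findGreatest_spec (P := fun j => f j ≤ u) (m := 0) (Nat.zero_le _) (by simp [hf0])
    have hi_le : i ≤ s - 1 := Nat.findGreatest_le _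
    rcases le_or_gt (u - f i) d with hcase | hcase
    · refine ⟨(f i : Fin n), Finset.mem_image.mpr ⟨i, by simp; omega, rfl⟩, ?_⟩
      rw [cyc_dist hn3, hval i (by omega)]
      simp only [dd]
      split_ifs <;> omega
    · rcases Nat.lt_or_ge i (s - 1) with h | h
      · have hnext : ¬ (f (i + 1) ≤ u) := by
          intro hcon
          have h2 : i + 1 ≤ Nat.findGreatest (fun j => f j ≤ u) (s - 1) :=
            Nat.le_findGreatest (by omega) hcon
          omega
        have hgap' := hgap i
        refine ⟨(f (i+1) : Fin n), Finset.mem_image.mpr ⟨i+1, by simp; omega, rfl⟩, ?_⟩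
        rw [cyc_dist hn3, hval (i+1) (by omega)]
        have hfi1 : f (i + 1) < n := hf_lt (i+1) (by omega)
        simp only [dd]
        split_ifs <;> omega
      · have hieq : i = s - 1 := by omega
        rw [hieq] at hfi hcase
        refine ⟨(f 0 : Fin n), Finset.mem_image.mpr ⟨0, by simp; omega, rfl⟩, ?_⟩
        rw [cyc_dist hn3, hval 0 (by omega), hf0]
        simp only [dd]
        split_ifs <;> omega
  · intro x hx y hy hxy
    obtain ⟨a, ha, rfl⟩ := Finset.mem_image.mp hx
    obtain ⟨b, hb, rfl⟩ := Finset.mem_image.mp hy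
    rw [mem_range] at ha hb
    rw [cyc_dist hn3, hval a ha, hval b hb]
    have hab : a ≠ b := by
      rintro rfl; exact hxy rfl
    have hlast : ∀ j, j < s → f j + q ≤ n := by
      intro j hj
      rcases Nat.lt_or_ge j (s-1) with h | h
      · have := hf_mono j (s-1) h; omega
      · have : j = s - 1 := by omega
        subst this; omega
    rcases Nat.lt_or_ge a b with h | h
    · have h1 := hf_mono a b h
      have h2 := hlast b hb
      simp only [dd]
      split_ifs <;> omega
    · have h1 := hf_mono b a (by omega)
      have h2 := hlast a ha
      simp only [dd]
      split_ifs <;> omega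

end cyc

section prodsec
variable {α β : Type*} {G : SimpleGraph α} {H : SimpleGraph β}

/-- swap hom -/
def swapHom (G : SimpleGraph α) (H : SimpleGraph β) : strongProd H G →g strongProd G H where
  toFun := Prod.swap
  map_rel' := by
    rintro ⟨a, b⟩ ⟨c, e⟩ (⟨h1, h2⟩ | ⟨h1, h2⟩ | ⟨h1, h2⟩)
    · exact Or.inr (Or.inl ⟨h2, h1⟩)
    · exact Or.inl ⟨h2, h1⟩
    · exact Or.inr (Or.inr ⟨h2, h1⟩)

lemma walk_prod_of_le {a c : α} {b e : β} (w1 : G.Walk a c) (w2 : H.Walk b e)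
    (h : w2.length ≤ w1.length) :
    ∃ w : (strongProd G H).Walk (a, b) (c, e), w.length = w1.length := by
  induction w1 generalizing b w2 with
  | nil =>
    cases w2 with
    | nil => exact ⟨Walk.nil, rfl⟩
    | cons h2 w2' => simp [Walk.length_cons] at h
  | @cons a a' c h1 w1' ih =>
    cases w2 with
    | nil =>
      obtain ⟨w, hw⟩ := ih (b := e) Walk.nil (Nat.zero_le _)
      exact ⟨Walk.cons (show (strongProd G H).Adj (a,e) (a',e) from Or.inl ⟨h1, rfl⟩) w,
        by simp [Walk.length_cons, hw]⟩
    | @cons b b' e h2 w2' =>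
      obtain ⟨w, hw⟩ := ih (b := b') w2' (by simpa [Walk.length_cons] using h)
      exact ⟨Walk.cons (show (strongProd G H).Adj (a,b) (a',b') from Or.inr (Or.inr ⟨h1, h2⟩)) w,
        by simp [Walk.length_cons, hw]⟩

lemma exists_walk_prod (hG : G.Connected) (hH : H.Connected) (x y : α × β) :
    ∃ w : (strongProd G H).Walk x y, w.length = max (G.dist x.1 y.1) (H.dist x.2 y.2) := by
  obtain ⟨w1, hw1⟩ := hG.exists_walk_length_eq_dist x.1 y.1
  obtain ⟨w2, hw2⟩ := hH.exists_walk_length_eq_dist x.2 y.2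
  rcases le_total w2.length w1.length with h | h
  · obtain ⟨w, hw⟩ := walk_prod_of_le w1 w2 h
    exact ⟨w, by omega⟩
  · obtain ⟨w, hw⟩ := walk_prod_of_le w2 w1 h
    refine ⟨(w.map (swapHom G H)).copy rfl rfl, ?_⟩
    show (w.map (swapHom G H)).length = _
    rw [Walk.length_map, hw]
    omega

lemma prod_connected (hG : G.Connected) (hH : H.Connected) :
    (strongProd G H).Connected := by
  have hne : Nonempty (α × β) := ⟨(hG.nonempty.some, hH.nonempty.some)⟩
  apply SimpleGraph.Connected.mk
  intro x y
  obtain ⟨w, -⟩ := exists_walk_prod hG hH x y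
  exact ⟨w⟩

lemma proj_dist_le (hG : G.Connected) (hH : H.Connected) {x y : α × β}
    (w : (strongProd G H).Walk x y) :
    G.dist x.1 y.1 ≤ w.length ∧ H.dist x.2 y.2 ≤ w.length := by
  induction w with
  | nil => simp
  | @cons x z y h w ih =>
    simp only [Walk.length_cons]
    constructor
    · rcases h with ⟨h1, h2⟩ | ⟨h1, h2⟩ | ⟨h1, h2⟩
      · have : G.dist x.1 z.1 = 1 := SimpleGraph.dist_eq_one_iff_adj.mpr h1
        calc G.dist x.1 y.1 ≤ G.dist x.1 z.1 + G.dist z.1 y.1 := hG.dist_triangle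
          _ ≤ w.length + 1 := by omega
      · rw [h1]; omega
      · have : G.dist x.1 z.1 = 1 := SimpleGraph.dist_eq_one_iff_adj.mpr h1
        calc G.dist x.1 y.1 ≤ G.dist x.1 z.1 + G.dist z.1 y.1 := hG.dist_triangle
          _ ≤ w.length + 1 := by omega
    · rcases h with ⟨h1, h2⟩ | ⟨h1, h2⟩ | ⟨h1, h2⟩
      · rw [h2]; omega
      · have : H.dist x.2 z.2 = 1 := SimpleGraph.dist_eq_one_iff_adj.mpr h2
        calc H.dist x.2 y.2 ≤ H.dist x.2 z.2 + H.dist z.2 y.2 := hH.dist_triangle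
          _ ≤ w.length + 1 := by omega
      · have : H.dist x.2 z.2 = 1 := SimpleGraph.dist_eq_one_iff_adj.mpr h2
        calc H.dist x.2 y.2 ≤ H.dist x.2 z.2 + H.dist z.2 y.2 := hH.dist_triangle
          _ ≤ w.length + 1 := by omega

lemma dist_prod (hG : G.Connected) (hH : H.Connected) (x y : α × β) :
    (strongProd G H).dist x y = max (G.dist x.1 y.1) (H.dist x.2 y.2) := by
  apply le_antisymm
  · obtain ⟨w, hw⟩ := exists_walk_prod hG hH x y
    exact hw ▸ SimpleGraph.dist_le w
  · obtain ⟨w, hw⟩ := (prod_connected hG hH).exists_walk_length_eq_dist x y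
    obtain ⟨h1, h2⟩ := proj_dist_le hG hH w
    omega

end prodsec

section gen
variable {V : Type*} {G : SimpleGraph V} {d p : ℕ}

lemma dpdn_le {S : Finset V} (h1 : IsDistDomSet G d S) (h2 : IsPacking G p S) :
    distPackDomNum G d p ≤ S.card :=
  sInf_le ⟨S, rfl, h1, h2⟩

lemma dpdn_ge (c : ℕ∞)
    (h : ∀ S : Finset V, IsDistDomSet G d S → IsPacking G p S → c ≤ S.card) :
    c ≤ distPackDomNum G d p :=
  le_sInf (by rintro a ⟨S, rfl, h1, h2⟩; exact h S h1 h2)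

lemma dpdn_eq_top
    (h : ∀ S : Finset V, IsDistDomSet G d S → IsPacking G p S → False) :
    distPackDomNum G d p = ⊤ := by
  unfold distPackDomNum
  rw [sInf_eq_top]
  rintro a ⟨S, rfl, h1, h2⟩
  exact absurd h1 (fun h1 => h S h1 h2)

lemma dpdn_one_le [Nonempty V] : 1 ≤ distPackDomNum G d p := by
  apply dpdn_ge
  intro S h1 _
  obtain ⟨u, hu, -⟩ := h1 Classical.ofNonempty
  have : 0 < S.card := Finset.card_pos.mpr ⟨u, hu⟩
  exact_mod_cast Nat.one_le_cast.mpr this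

lemma dpdn_ne_zero [Nonempty V] : distPackDomNum G d p ≠ 0 := by
  intro h0
  have := @dpdn_one_le _ G d p _
  rw [h0] at this
  simp at this

lemma dpdn_exists_min (hne : distPackDomNum G d p ≠ ⊤) :
    ∃ S : Finset V, IsDistDomSet G d S ∧ IsPacking G p S ∧
      (S.card : ℕ∞) = distPackDomNum G d p := by
  have hne' : {c : ℕ∞ | ∃ S : Finset V, c = S.card ∧ IsDistDomSet G d S ∧ IsPacking G p S}.Nonempty := by
    by_contra h
    rw [Set.not_nonempty_iff_eq_empty] at h
    exact hne (by unfold distPackDomNum; rw [h, sInf_empty])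
  obtain ⟨S, hS, h1, h2⟩ := csInf_mem hne'
  exact ⟨S, h1, h2, hS.symm⟩

end gen

section assembly
variable {α β : Type*} {G : SimpleGraph α} {H : SimpleGraph β} {d p : ℕ}

lemma witness_prod (hG : G.Connected) (hH : H.Connected) {S : Finset α} {T : Finset β}
    (hS1 : IsDistDomSet G d S) (hS2 : IsPacking G p S)
    (hT1 : IsDistDomSet H d T) (hT2 : IsPacking H p T) :
    IsDistDomSet (strongProd G H) d (S ×ˢ T) ∧ IsPacking (strongProd G H) p (S ×ˢ T) := by
  constructor
  · rintro ⟨a, b⟩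
    obtain ⟨u, hu, hud⟩ := hS1 a
    obtain ⟨w, hw, hwd⟩ := hT1 b
    refine ⟨(u, w), Finset.mem_product.mpr ⟨hu, hw⟩, ?_⟩
    rw [dist_prod hG hH]
    simp only [max_le_iff]
    exact ⟨hud, hwd⟩
  · rintro ⟨x1, x2⟩ hx ⟨y1, y2⟩ hy hxy
    rw [Finset.mem_product] at hx hy
    rw [dist_prod hG hH]
    rcases eq_or_ne x1 y1 with h1 | h1
    · have h2 : x2 ≠ y2 := by
        intro h2; exact hxy (by rw [h1, h2])
      have := hT2 x2 hx.2 y2 hy.2 h2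
      simp only [le_max_iff]
      right; exact this
    · have := hS2 x1 hx.1 y1 hy.1 h1
      simp only [le_max_iff]
      left; exact this

lemma dpdn_prod_le (hG : G.Connected) (hH : H.Connected) :
    distPackDomNum (strongProd G H) d p
      ≤ distPackDomNum G d p * distPackDomNum H d p := by
  haveI : Nonempty α := hG.nonempty
  haveI : Nonempty β := hH.nonempty
  rcases eq_or_ne (distPackDomNum G d p) ⊤ with hGt | hGt
  · rw [hGt, ENat.top_mul dpdn_ne_zero]
    exact le_top
  rcases eq_or_ne (distPackDomNum H d p) ⊤ with hHt | hHt
  · rw [hHt, ENat.mul_top dpdn_ne_zero]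
    exact le_top
  obtain ⟨S, hS1, hS2, hScard⟩ := dpdn_exists_min hGt
  obtain ⟨T, hT1, hT2, hTcard⟩ := dpdn_exists_min hHt
  obtain ⟨hD, hP⟩ := witness_prod hG hH hS1 hS2 hT1 hT2
  calc distPackDomNum (strongProd G H) d p ≤ ((S ×ˢ T).card : ℕ∞) := dpdn_le hD hP
    _ = (S.card : ℕ∞) * (T.card : ℕ∞) := by
        rw [Finset.card_product]; push_cast; ring
    _ = _ := by rw [hScard, hTcard]

end assembly

section counts
variable {m n : ℕ} [NeZero m] [NeZero n]

lemma window_count (hm3 : 3 ≤ m) (hn3 : 3 ≤ n) {d s₀ : ℕ} (hdn : 2 * d + 1 ≤ n)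
    {S : Finset (Fin m × Fin n)}
    (hdom : IsDistDomSet (strongProd (cycleGraph m) (cycleGraph n)) d S)
    (hlow : ∀ X : Finset (Fin m), IsDistDomSet (cycleGraph m) d X → s₀ ≤ X.card) :
    n * s₀ ≤ S.card * (2 * d + 1) := by
  classical
  set W : Fin n → Finset (Fin m × Fin n) :=
    fun j => S.filter (fun v => (cycleGraph n).dist v.2 j ≤ d) with hW
  have hper : ∀ j, s₀ ≤ (W j).card := by
    intro j
    have hXdom : IsDistDomSet (cycleGraph m) d ((W j).image Prod.fst) := by
      intro a
      obtain ⟨u, hu, hud⟩ := hdom (a, j)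
      rw [dist_prod (cyc_conn (by omega)) (cyc_conn (by omega))] at hud
      simp only [max_le_iff] at hud
      refine ⟨u.1, Finset.mem_image.mpr ⟨u, ?_, rfl⟩, hud.1⟩
      rw [hW]
      simp only [mem_filter]
      exact ⟨hu, hud.2⟩
    calc s₀ ≤ ((W j).image Prod.fst).card := hlow _ hXdom
      _ ≤ (W j).card := Finset.card_image_le
  have hsum : ∑ j : Fin n, (W j).card = S.card * (2 * d + 1) := by
    have h1 : ∀ j : Fin n, (W j).card
        = ∑ v ∈ S, (if (cycleGraph n).dist v.2 j ≤ d then 1 else 0) := by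
      intro j; rw [hW]; rw [Finset.card_filter]
    rw [Finset.sum_congr rfl (fun j _ => h1 j), Finset.sum_comm]
    have h2 : ∀ v : Fin m × Fin n, v ∈ S →
        ∑ j : Fin n, (if (cycleGraph n).dist v.2 j ≤ d then 1 else 0) = 2 * d + 1 := by
      intro v _
      rw [← Finset.card_filter]
      exact card_ball_eq hn3 v.2 d hdn
    rw [Finset.sum_congr rfl h2, Finset.sum_const, smul_eq_mul]
  calc n * s₀ = ∑ _j : Fin n, s₀ := by rw [Finset.sum_const, card_univ, Fintype.card_fin, smul_eq_mul]
    _ ≤ ∑ j : Fin n, (W j).card := Finset.sum_le_sum (fun j _ => hper j)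
    _ = S.card * (2 * d + 1) := hsum

lemma strip_count (hm3 : 3 ≤ m) (hn3 : 3 ≤ n) {q cap : ℕ} (hq : 1 ≤ q) (hqn : q ≤ n)
    {S : Finset (Fin m × Fin n)}
    (hcap : ∀ c : Fin n,
      (S.filter (fun v => ∃ t, t < q ∧ c + (t : Fin n) = v.2)).card ≤ cap) :
    S.card * q ≤ n * cap := by
  classical
  have hsum : ∑ c : Fin n, (S.filter (fun v => ∃ t, t < q ∧ c + (t : Fin n) = v.2)).card
      = S.card * q := by
    have h1 : ∀ c : Fin n, (S.filter (fun v => ∃ t, t < q ∧ c + (t : Fin n) = v.2)).card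
        = ∑ v ∈ S, (if (∃ t, t < q ∧ c + (t : Fin n) = v.2) then 1 else 0) := by
      intro c; rw [Finset.card_filter]
    rw [Finset.sum_congr rfl (fun c _ => h1 c), Finset.sum_comm]
    have h2 : ∀ v : Fin m × Fin n, v ∈ S →
        ∑ c : Fin n, (if (∃ t, t < q ∧ c + (t : Fin n) = v.2) then 1 else 0) = q := by
      intro v _
      rw [← Finset.card_filter]
      exact count_intervals hq hqn v.2
    rw [Finset.sum_congr rfl h2, Finset.sum_const, smul_eq_mul]
  calc S.card * q
      = ∑ c : Fin n, (S.filter (fun v => ∃ t, t < q ∧ c + (t : Fin n) = v.2)).card := hsum.symm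
    _ ≤ ∑ _c : Fin n, cap := Finset.sum_le_sum (fun c _ => hcap c)
    _ = n * cap := by rw [Finset.sum_const, card_univ, Fintype.card_fin, smul_eq_mul]

end counts

lemma arith_caseI (s e p m : ℕ) (hs : 2 ≤ s) (hp : p + 1 ≤ e + 1)
    (hm : (s - 1) * (2 * (e + 2) + 1) + 1 ≤ m) : s * (p + 1) ≤ m := by
  obtain ⟨t, rfl⟩ : ∃ t, s = t + 2 := ⟨s - 2, by omega⟩
  have h1 : (t + 2) * (p + 1) ≤ (t + 2) * (e + 1) := Nat.mul_le_mul_left _ (by omega)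
  have h2 : (t + 2) * (e + 1) ≤ (t + 1) * (2 * (e + 2) + 1) + 1 := by nlinarith
  have h3 : (t + 2) - 1 = t + 1 := by omega
  rw [h3] at hm
  omega

theorem gamma_torus_eq_of_residue_2d_sub_one (d p : ℕ) (hd : 1 ≤ d) (m n : ℕ) (hm : 3 ≤ m)
    (hn : 3 ≤ n) (hmod : n % (2 * d + 1) = 2 * d - 1) (hmle : m ≤ 2 * d ^ 2 + d) :
    distPackDomNum (strongProd (cycleGraph m) (cycleGraph n)) d p =
      distPackDomNum (cycleGraph m) d p * distPackDomNum (cycleGraph n) d p := by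
  haveI : NeZero m := ⟨by omega⟩
  haveI : NeZero n := ⟨by omega⟩
  haveI : Nonempty (Fin m) := ⟨0⟩
  haveI : Nonempty (Fin n) := ⟨0⟩
  have hcm : (cycleGraph m).Connected := cyc_conn (by omega)
  have hcn : (cycleGraph n).Connected := cyc_conn (by omega)
  set k := n / (2 * d + 1) with hkdef
  have hn_eq : (2 * d + 1) * k + (2 * d - 1) = n := by
    conv_rhs => rw [← Nat.div_add_mod n (2 * d + 1)]
    rw [hmod]
  set s₀ := (m + 2 * d) / (2 * d + 1) with hs0def
  have hdiv := Nat.div_add_mod (m + 2 * d) (2 * d + 1)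
  have hmod' : (m + 2 * d) % (2 * d + 1) < 2 * d + 1 := Nat.mod_lt _ (by omega)
  rw [← hs0def] at hdiv
  have hcomm0 : s₀ * (2 * d + 1) = (2 * d + 1) * s₀ := by ring
  have hs0_ub : m ≤ s₀ * (2 * d + 1) := by omega
  have hs0_pos : 1 ≤ s₀ := by
    rcases Nat.eq_zero_or_pos s₀ with h | h
    · rw [h] at hdiv; simp at hdiv; omega
    · exact h
  have hs0_lb : (s₀ - 1) * (2 * d + 1) + 1 ≤ m := by
    have h3 : s₀ - 1 + 1 = s₀ := by omega
    have h2 : (s₀ - 1) * (2 * d + 1) + (2 * d + 1) = s₀ * (2 * d + 1) := by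
      calc (s₀ - 1) * (2 * d + 1) + (2 * d + 1) = (s₀ - 1 + 1) * (2 * d + 1) := by ring
        _ = s₀ * (2 * d + 1) := by rw [h3]
    omega
  have hs0_le_d : s₀ ≤ d := by
    by_contra hc
    have h1 : d * (2 * d + 1) ≤ (s₀ - 1) * (2 * d + 1) :=
      Nat.mul_le_mul_right _ (by omega)
    have h2 : d * (2 * d + 1) = 2 * d ^ 2 + d := by ring
    omega
  -- generic lower bound for m-cycle dominating sets
  have hXlow : ∀ X : Finset (Fin m), IsDistDomSet (cycleGraph m) d X → s₀ ≤ X.card := by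
    intro X hX
    have h1 := dom_card (by omega) hX
    by_contra hc
    have h2 : X.card * (2 * d + 1) ≤ (s₀ - 1) * (2 * d + 1) :=
      Nat.mul_le_mul_right _ (by omega)
    omega
  rcases Nat.eq_zero_or_pos k with hk0 | hk1
  · -- Case I : k = 0, n = 2d - 1
    have hk0' : (2 * d + 1) * k = 0 := by rw [hk0, Nat.mul_zero]
    have hne : n = 2 * d - 1 := by omega
    have hd2 : 2 ≤ d := by omega
    have hγn : distPackDomNum (cycleGraph n) d p = 1 := by
      apply le_antisymm
      · obtain ⟨h1, h2⟩ := cyc_single (n := n) (by omega) (d := d) (p := p) (by omega)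
        have h3 := dpdn_le h1 h2
        simpa using h3
      · exact dpdn_one_le
    have hmain : distPackDomNum (strongProd (cycleGraph m) (cycleGraph n)) d p
        = distPackDomNum (cycleGraph m) d p := by
      apply le_antisymm
      · calc distPackDomNum (strongProd (cycleGraph m) (cycleGraph n)) d p
            ≤ distPackDomNum (cycleGraph m) d p * distPackDomNum (cycleGraph n) d p :=
              dpdn_prod_le hcm hcn
          _ = distPackDomNum (cycleGraph m) d p := by rw [hγn, mul_one]
      · apply dpdn_ge
        intro S h1 h2
        have hXdom : IsDistDomSet (cycleGraph m) d (S.image Prod.fst) := by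
          intro a
          obtain ⟨u, hu, hud⟩ := h1 (a, 0)
          rw [dist_prod hcm hcn] at hud
          simp only [max_le_iff] at hud
          exact ⟨u.1, Finset.mem_image.mpr ⟨u, hu, rfl⟩, hud.1⟩
        rcases le_or_gt (d - 1) p with hp | hp
        · -- p ≥ d - 1 : the projection is also a packing
          have hXpack : IsPacking (cycleGraph m) p (S.image Prod.fst) := by
            intro x hx y hy hxy
            obtain ⟨u, hu, rfl⟩ := Finset.mem_image.mp hx
            obtain ⟨w, hw, rfl⟩ := Finset.mem_image.mp hy
            have hneq : u ≠ w := by rintro rfl; exact hxy rfl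
            have hpk := h2 u hu w hw hneq
            rw [dist_prod hcm hcn] at hpk
            have hdn2 := cyc_two_dist_le (n := n) (by omega) u.2 w.2
            omega
          calc distPackDomNum (cycleGraph m) d p ≤ ((S.image Prod.fst).card : ℕ∞) :=
                dpdn_le hXdom hXpack
            _ ≤ (S.card : ℕ∞) := Nat.cast_le.mpr Finset.card_image_le
        · -- p ≤ d - 2 : γ_m = s₀ is finite
          have hγm_le : distPackDomNum (cycleGraph m) d p ≤ (s₀ : ℕ∞) := by
            rcases eq_or_lt_of_le hs0_pos with h1' | h1'
            · have hbr : s₀ * (2 * d + 1) = 2 * d + 1 := by rw [← h1']; ring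
              obtain ⟨hh1, hh2⟩ := cyc_single (n := m) (by omega) (d := d) (p := p) (by omega)
              have h3 := dpdn_le hh1 hh2
              rw [← h1']
              simpa using h3
            · have harith : s₀ * (p + 1) ≤ m := by
                obtain ⟨e, rfl⟩ : ∃ e, d = e + 2 := ⟨d - 2, by omega⟩
                exact arith_caseI s₀ e p m (by omega) (by omega) hs0_lb
              have hsm : s₀ ≤ m := by
                have := Nat.le_mul_of_pos_right (s₀ - 1) (show 0 < 2 * d + 1 by omega)
                omega
              obtain ⟨T, hTc, hTdom, hTsep⟩ := cyc_construction (n := m) (by omega)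
                (s := s₀) (d := d) (by omega) hsm hs0_ub
              have hqm : p + 1 ≤ m / s₀ := (Nat.le_div_iff_mul_le (by omega)).mpr
                (by have : (p + 1) * s₀ = s₀ * (p + 1) := by ring
                    omega)
              have hTpack : IsPacking (cycleGraph m) p T := by
                intro x hx y hy hxy
                exact le_trans hqm (hTsep x hx y hy hxy)
              have h3 := dpdn_le hTdom hTpack
              rw [hTc] at h3
              exact h3
          calc distPackDomNum (cycleGraph m) d p ≤ (s₀ : ℕ∞) := hγm_le
            _ ≤ ((S.image Prod.fst).card : ℕ∞) := Nat.cast_le.mpr (hXlow _ hXdom)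
            _ ≤ (S.card : ℕ∞) := Nat.cast_le.mpr Finset.card_image_le
    rw [hmain, hγn, mul_one]
  · -- k ≥ 1
    have hprod1 : 2 * d + 1 ≤ (2 * d + 1) * k := Nat.le_mul_of_pos_right _ (by omega)
    have hdn : 2 * d + 1 ≤ n := by omega
    have hn4d : 4 * d ≤ n := by omega
    rcases le_or_gt (2 * d) p with hp2d | hp2d
    · -- Case II : p ≥ 2d, both sides are ⊤
      have hno_n : ∀ T : Finset (Fin n),
          IsDistDomSet (cycleGraph n) d T → IsPacking (cycleGraph n) p T → False := by
        intro T h1 h2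
        have hc1 := dom_card (by omega) h1
        have hT2 : 2 ≤ T.card := by
          by_contra hc
          have h3 : T.card * (2 * d + 1) ≤ 1 * (2 * d + 1) :=
            Nat.mul_le_mul_right _ (by omega)
          omega
        have hc2 := sep_card (n := n) (by omega) (q := p + 1) (by omega) h2 hT2
        have hc3 : T.card * (2 * d + 1) ≤ T.card * (p + 1) :=
          Nat.mul_le_mul_left _ (by omega)
        have hc4 : T.card * (2 * d + 1) = n := by omega
        have hc5 : (T.card * (2 * d + 1)) % (2 * d + 1) = 0 := Nat.mul_mod_left _ _
        rw [hc4, hmod] at hc5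
        omega
      have hγn_top : distPackDomNum (cycleGraph n) d p = ⊤ := dpdn_eq_top hno_n
      have hLHS_top : distPackDomNum (strongProd (cycleGraph m) (cycleGraph n)) d p = ⊤ := by
        apply dpdn_eq_top
        intro S h1 h2
        apply hno_n ((S.filter (fun v => (cycleGraph m).dist v.1 0 ≤ d)).image Prod.snd)
        · intro v
          obtain ⟨u, hu, hud⟩ := h1 (0, v)
          rw [dist_prod hcm hcn] at hud
          simp only [max_le_iff] at hud
          exact ⟨u.2, Finset.mem_image.mpr ⟨u, Finset.mem_filter.mpr ⟨hu, hud.1⟩, rfl⟩, hud.2⟩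
        · intro y hy y' hy' hne'
          obtain ⟨u, hu, rfl⟩ := Finset.mem_image.mp hy
          obtain ⟨w, hw, rfl⟩ := Finset.mem_image.mp hy'
          rw [Finset.mem_filter] at hu hw
          have hneq : u ≠ w := by rintro rfl; exact hne' rfl
          have hpk := h2 u hu.1 w hw.1 hneq
          rw [dist_prod hcm hcn] at hpk
          have htr : (cycleGraph m).dist u.1 w.1
              ≤ (cycleGraph m).dist u.1 0 + (cycleGraph m).dist 0 w.1 := hcm.dist_triangle
          have hcomm : (cycleGraph m).dist 0 w.1 = (cycleGraph m).dist w.1 0 :=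
            SimpleGraph.dist_comm
          omega
      rw [hLHS_top, hγn_top, ENat.mul_top dpdn_ne_zero]
    · -- Case III : p ≤ 2d - 1
      have hq_n : n / (k + 1) = 2 * d := by
        apply Nat.div_eq_of_lt_le
        · have e1 : 2 * d * (k + 1) = 2 * d * k + 2 * d := by ring
          have e2 : (2 * d + 1) * k = 2 * d * k + k := by ring
          omega
        · have e1 : (2 * d + 1) * (k + 1) = (2 * d + 1) * k + (2 * d + 1) := by ring
          omega
      have hsn : k + 1 ≤ n := by
        have : k ≤ (2 * d + 1) * k := Nat.le_mul_of_pos_left _ (by omega)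
        omega
      have hub_n : n ≤ (k + 1) * (2 * d + 1) := by
        have e1 : (k + 1) * (2 * d + 1) = (2 * d + 1) * k + (2 * d + 1) := by ring
        omega
      have hγn_eq : distPackDomNum (cycleGraph n) d p = (k + 1 : ℕ) := by
        apply le_antisymm
        · obtain ⟨T, hTc, hTdom, hTsep⟩ := cyc_construction (n := n) (by omega)
            (s := k + 1) (d := d) (by omega) hsn hub_n
          have hTpack : IsPacking (cycleGraph n) p T := by
            intro x hx y hy hxy
            have := hTsep x hx y hy hxy
            rw [hq_n] at this
            omega
          have h3 := dpdn_le hTdom hTpack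
          rw [hTc] at h3
          exact h3
        · apply dpdn_ge
          intro T h1 h2
          have hc1 := dom_card (by omega) h1
          have hge : k + 1 ≤ T.card := by
            by_contra hc
            have h3 : T.card * (2 * d + 1) ≤ k * (2 * d + 1) :=
              Nat.mul_le_mul_right _ (by omega)
            have h4 : k * (2 * d + 1) = (2 * d + 1) * k := by ring
            omega
          exact_mod_cast Nat.cast_le.mpr hge
      -- product lower bound (uses only domination)
      have hSlow : ∀ S : Finset (Fin m × Fin n),
          IsDistDomSet (strongProd (cycleGraph m) (cycleGraph n)) d S →
          s₀ * (k + 1) ≤ S.card := by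
        intro S h1
        have hw := window_count hm hn hdn h1 hXlow
        by_contra hc
        have b0 : (S.card + 1) * (2 * d + 1) ≤ (s₀ * (k + 1)) * (2 * d + 1) :=
          Nat.mul_le_mul_right _ (by omega)
        have b1 : (s₀ * (k + 1)) * (2 * d + 1) = s₀ * ((2 * d + 1) * (k + 1)) := by ring
        have b2 : (2 * d + 1) * (k + 1) = n + 2 := by
          have e1 : (2 * d + 1) * (k + 1) = (2 * d + 1) * k + (2 * d + 1) := by ring
          omega
        have b3 : s₀ * ((2 * d + 1) * (k + 1)) = s₀ * n + 2 * s₀ := by rw [b2]; ring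
        have b4 : n * s₀ = s₀ * n := by ring
        have b5 : (S.card + 1) * (2 * d + 1) = S.card * (2 * d + 1) + (2 * d + 1) := by ring
        omega
      by_cases hfin : s₀ = 1 ∨ s₀ * (p + 1) ≤ m
      · -- Case IIIa : γ_m = s₀ finite
        have hγm_eq : distPackDomNum (cycleGraph m) d p = (s₀ : ℕ) := by
          apply le_antisymm
          · rcases eq_or_ne s₀ 1 with h1' | h1'
            · have hbr : s₀ * (2 * d + 1) = 2 * d + 1 := by rw [h1']; ring
              obtain ⟨hh1, hh2⟩ := cyc_single (n := m) (by omega) (d := d) (p := p) (by omega)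
              have h3 := dpdn_le hh1 hh2
              rw [h1']
              simpa using h3
            · have hs2' : 2 ≤ s₀ := by omega
              have harith : s₀ * (p + 1) ≤ m := by
                rcases hfin with h | h
                · exact absurd h h1'
                · exact h
              have hsm : s₀ ≤ m := by
                have := Nat.le_mul_of_pos_right (s₀ - 1) (show 0 < 2 * d + 1 by omega)
                omega
              obtain ⟨T, hTc, hTdom, hTsep⟩ := cyc_construction (n := m) (by omega)
                (s := s₀) (d := d) hs2' hsm hs0_ub
              have hqm : p + 1 ≤ m / s₀ := (Nat.le_div_iff_mul_le (by omega)).mpr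
                (by have : (p + 1) * s₀ = s₀ * (p + 1) := by ring
                    omega)
              have hTpack : IsPacking (cycleGraph m) p T := by
                intro x hx y hy hxy
                exact le_trans hqm (hTsep x hx y hy hxy)
              have h3 := dpdn_le hTdom hTpack
              rw [hTc] at h3
              exact h3
          · apply dpdn_ge
            intro T h1 h2
            exact_mod_cast Nat.cast_le.mpr (hXlow T h1)
        have hLHS : distPackDomNum (strongProd (cycleGraph m) (cycleGraph n)) d p
            = ((s₀ * (k + 1) : ℕ) : ℕ∞) := by
          apply le_antisymm
          · calc distPackDomNum (strongProd (cycleGraph m) (cycleGraph n)) d p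
                ≤ distPackDomNum (cycleGraph m) d p * distPackDomNum (cycleGraph n) d p :=
                  dpdn_prod_le hcm hcn
              _ = ((s₀ * (k + 1) : ℕ) : ℕ∞) := by
                  rw [hγm_eq, hγn_eq, ← Nat.cast_mul]
          · apply dpdn_ge
            intro S h1 h2
            exact_mod_cast Nat.cast_le.mpr (hSlow S h1)
        rw [hLHS, hγm_eq, hγn_eq, ← Nat.cast_mul]
      · -- Case IIIb : γ_m = ⊤
        push_neg at hfin
        obtain ⟨hs0ne1, hmlt⟩ := hfin
        have hs2' : 2 ≤ s₀ := by omega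
        have hγm_top : distPackDomNum (cycleGraph m) d p = ⊤ := by
          apply dpdn_eq_top
          intro T h1 h2
          have hge := hXlow T h1
          have hT2 : 2 ≤ T.card := by omega
          have hc2 := sep_card (n := m) (by omega) (q := p + 1) (by omega) h2 hT2
          have hc3 : s₀ * (p + 1) ≤ T.card * (p + 1) :=
            Nat.mul_le_mul_right _ (by omega)
          omega
        have hLHS_top : distPackDomNum (strongProd (cycleGraph m) (cycleGraph n)) d p = ⊤ := by
          apply dpdn_eq_top
          intro S h1 h2
          have hlow := hSlow S h1
          -- strips of width p+1 in the n-direction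
          have hcap : ∀ c : Fin n,
              (S.filter (fun v => ∃ t, t < p + 1 ∧ c + (t : Fin n) = v.2)).card ≤ s₀ - 1 := by
            intro c
            set F := S.filter (fun v => ∃ t, t < p + 1 ∧ c + (t : Fin n) = v.2) with hF
            have hclose : ∀ v ∈ F, ∀ w ∈ F, v ≠ w →
                p + 1 ≤ (cycleGraph m).dist v.1 w.1 := by
              intro v hv w hw hvw
              rw [hF, Finset.mem_filter] at hv hw
              obtain ⟨t, ht, hvt⟩ := hv.2
              obtain ⟨t', ht', hwt⟩ := hw.2
              have hdn' : (cycleGraph n).dist v.2 w.2 ≤ p :=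
                le_trans (dist_interval (by omega) (q := p + 1) (by omega) ht ht' hvt hwt)
                  (by omega)
              have hpk := h2 v hv.1 w hw.1 hvw
              rw [dist_prod hcm hcn] at hpk
              omega
            have hinj : Set.InjOn Prod.fst (F : Set (Fin m × Fin n)) := by
              intro v hv w hw hvw
              by_contra hne'
              have := hclose v hv w hw hne'
              rw [hvw] at this
              rw [SimpleGraph.dist_self] at this
              omega
            have hXcard : (F.image Prod.fst).card = F.card :=
              Finset.card_image_of_injOn hinj
            have hXsep : ∀ x ∈ F.image Prod.fst, ∀ y ∈ F.image Prod.fst, x ≠ y →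
                p + 1 ≤ (cycleGraph m).dist x y := by
              intro x hx y hy hxy
              obtain ⟨v, hv, rfl⟩ := Finset.mem_image.mp hx
              obtain ⟨w, hw, rfl⟩ := Finset.mem_image.mp hy
              exact hclose v hv w hw (by rintro rfl; exact hxy rfl)
            rcases le_or_gt 2 (F.image Prod.fst).card with hX2 | hX2
            · have hc2 := sep_card (n := m) (by omega) (q := p + 1) (by omega) hXsep hX2
              have hc3 : (F.image Prod.fst).card < s₀ := by
                by_contra hc
                have : s₀ * (p + 1) ≤ (F.image Prod.fst).card * (p + 1) :=
                  Nat.mul_le_mul_right _ (by omega)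
                omega
              omega
            · omega
          have hstrip := strip_count hm hn (q := p + 1) (by omega) (by omega) hcap
          -- final arithmetic contradiction
          have c0 : (s₀ * (k + 1)) * (p + 1) ≤ S.card * (p + 1) :=
            Nat.mul_le_mul_right _ hlow
          have c1 : (s₀ * (k + 1)) * (p + 1) = (k + 1) * (s₀ * (p + 1)) := by ring
          have c2 : (s₀ - 1) * (2 * d + 1) + 2 ≤ s₀ * (p + 1) := by omega
          have c3 : (k + 1) * ((s₀ - 1) * (2 * d + 1) + 2)
              ≤ (k + 1) * (s₀ * (p + 1)) := Nat.mul_le_mul_left _ c2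
          have c4 : (k + 1) * ((s₀ - 1) * (2 * d + 1) + 2)
              = (s₀ - 1) * ((2 * d + 1) * (k + 1)) + 2 * (k + 1) := by ring
          have c5 : (2 * d + 1) * (k + 1) = n + 2 := by
            have e1 : (2 * d + 1) * (k + 1) = (2 * d + 1) * k + (2 * d + 1) := by ring
            omega
          have c6 : (s₀ - 1) * ((2 * d + 1) * (k + 1))
              = (s₀ - 1) * n + (s₀ - 1) * 2 := by rw [c5]; ring
          have c7 : n * (s₀ - 1) = (s₀ - 1) * n := by ring
          omega
        rw [hLHS_top, hγm_top, hγn_eq,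
          ENat.top_mul (Nat.cast_ne_zero.mpr (Nat.succ_ne_zero k))]
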